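/- Let f : {-1,1}^n → ℝ be a nonzero function of degree at most k. Then E_x[|f(x)|] ≥ (1/4) e^{-4k} · ||f||_2, where ||f||_2 = (E_x[f(x)^2])^{1/2} and x is uniform on {-1,1}^n. -/

import Mathlib

/-- The sign of a Boolean, as a real number in `{-1,1}`. -/
def sgn (b : Bool) : ℝ := if b then 1 else -1

/-- Fourier coefficient of a function on the Boolean cube `{-1,1}^n`. -/
noncomputable def cubeCoeff {n : ℕ} (f : (Fin n → Bool) → ℝ) (K : Finset (Fin n)) : ℝ :=
  (2 : ℝ) ^ (-(n : ℤ)) * ∑ x : Fin n → Bool, f x * ∏ i ∈ K, sgn (x i)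

/-- Expectation over a uniformly random point of the Boolean cube. -/
noncomputable def cubeMean {n : ℕ} (f : (Fin n → Bool) → ℝ) : ℝ :=
  (2 : ℝ) ^ (-(n : ℤ)) * ∑ x : Fin n → Bool, f x

/-!
Bonami's inequality `E f⁴ ≤ 9^k (E f²)²` for `f` of degree at most `k` follows by induction on
the dimension from the splitting `f(b, y) = g y + b · h y`, where `g` has degree at most `k` and
`h` at most `k - 1` (and `h = 0` if `k = 0`): the cross term `6 E[g² h²]` is controlled by
Cauchy–Schwarz. Two further Cauchy–Schwarz steps give `(E f²)³ ≤ (E |f|)² E f⁴`, hence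
`‖f‖₂ ≤ 3^k E |f|`, and `e^{-4k} / 4 ≤ 3^{-k}`.
-/

open Finset

section CubeMean

variable {n : ℕ}

lemma cubeMean_add (F G : (Fin n → Bool) → ℝ) :
    cubeMean (fun x => F x + G x) = cubeMean F + cubeMean G := by
  simp only [cubeMean, sum_add_distrib, mul_add]

@[simp]
lemma cubeMean_zero : cubeMean (fun _ : Fin n → Bool => (0 : ℝ)) = 0 := by
  simp [cubeMean]

lemma cubeMean_const_mul (c : ℝ) (F : (Fin n → Bool) → ℝ) :
    cubeMean (fun x => c * F x) = c * cubeMean F := by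
  simp only [cubeMean, ← mul_sum]
  ring

lemma cubeMean_nonneg {F : (Fin n → Bool) → ℝ} (hF : ∀ x, 0 ≤ F x) : 0 ≤ cubeMean F :=
  mul_nonneg (by positivity) (sum_nonneg fun x _ => hF x)

lemma cubeMean_fin_zero (F : (Fin 0 → Bool) → ℝ) (x : Fin 0 → Bool) : cubeMean F = F x := by
  simp only [cubeMean, Fintype.sum_unique, CharP.cast_eq_zero, neg_zero, zpow_zero, one_mul]
  exact congrArg F (Subsingleton.elim _ _)

lemma cubeMean_succ (F : (Fin (n + 1) → Bool) → ℝ) :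
    cubeMean F = cubeMean (fun y => (F (Fin.cons true y) + F (Fin.cons false y)) / 2) := by
  simp only [cubeMean, ← Equiv.sum_comp (Fin.consEquiv fun _ => Bool) F,
    Fintype.sum_prod_type, Fintype.sum_bool, ← sum_div, sum_add_distrib, zpow_neg, zpow_natCast,
    pow_succ]
  field_simp
  rfl

lemma cubeMean_mul_sq_le (u v : (Fin n → Bool) → ℝ) :
    cubeMean (fun x => u x * v x) ^ 2 ≤ cubeMean (fun x => u x ^ 2) * cubeMean (fun x => v x ^ 2) := by
  simp only [cubeMean]
  rw [mul_pow, mul_mul_mul_comm, ← sq]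
  exact mul_le_mul_of_nonneg_left (sum_mul_sq_le_sq_mul_sq univ u v) (by positivity)

end CubeMean

section HeadDecomposition

variable {n : ℕ}

noncomputable def headMean (f : (Fin (n + 1) → Bool) → ℝ) (y : Fin n → Bool) : ℝ :=
  (f (Fin.cons true y) + f (Fin.cons false y)) / 2

noncomputable def headDeriv (f : (Fin (n + 1) → Bool) → ℝ) (y : Fin n → Bool) : ℝ :=
  (f (Fin.cons true y) - f (Fin.cons false y)) / 2

lemma apply_cons_eq_headMean_add (f : (Fin (n + 1) → Bool) → ℝ) (b : Bool) (y : Fin n → Bool) :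
    f (Fin.cons b y) = headMean f y + sgn b * headDeriv f y := by
  cases b <;> simp only [headMean, headDeriv, sgn, Bool.false_eq_true, if_true, if_false] <;> ring

lemma prod_sgn_cons_map_succ (K : Finset (Fin n)) (b : Bool) (y : Fin n → Bool) :
    ∏ i ∈ K.map (Fin.succEmb n), sgn ((Fin.cons b y : Fin (n + 1) → Bool) i)
      = ∏ i ∈ K, sgn (y i) := by
  simp [prod_map]

lemma zero_notMem_map_succ (K : Finset (Fin n)) : (0 : Fin (n + 1)) ∉ K.map (Fin.succEmb n) := by
  simp [Fin.succ_ne_zero]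

lemma cubeCoeff_headMean (f : (Fin (n + 1) → Bool) → ℝ) (K : Finset (Fin n)) :
    cubeCoeff (headMean f) K = cubeCoeff f (K.map (Fin.succEmb n)) := by
  change cubeMean _ = cubeMean _
  rw [cubeMean_succ (fun x => f x * _)]
  simp only [prod_sgn_cons_map_succ, headMean]
  congr 1
  funext y
  ring

lemma cubeCoeff_headDeriv (f : (Fin (n + 1) → Bool) → ℝ) (K : Finset (Fin n)) :
    cubeCoeff (headDeriv f) K = cubeCoeff f (insert 0 (K.map (Fin.succEmb n))) := by
  change cubeMean _ = cubeMean _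
  rw [cubeMean_succ (fun x => f x * _)]
  simp only [prod_insert (zero_notMem_map_succ K), Fin.cons_zero, prod_sgn_cons_map_succ]
  simp only [headDeriv, sgn, if_true, Bool.false_eq_true, if_false]
  congr 1
  funext y
  ring

lemma card_insert_zero_map_succ (K : Finset (Fin n)) :
    (insert 0 (K.map (Fin.succEmb n))).card = K.card + 1 := by
  rw [card_insert_of_notMem (zero_notMem_map_succ K), card_map]

end HeadDecomposition

theorem eq_zero_of_cubeCoeff_eq_zero :
    ∀ {n : ℕ} {f : (Fin n → Bool) → ℝ}, (∀ K, cubeCoeff f K = 0) → ∀ x, f x = 0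
  | 0, f, hf, x => by
    rw [← cubeMean_fin_zero f x]
    simpa only [cubeCoeff, cubeMean, prod_empty, mul_one] using hf ∅
  | n + 1, f, hf, x => by
    have hmean := eq_zero_of_cubeCoeff_eq_zero fun K => (cubeCoeff_headMean f K).trans (hf _)
    have hderiv := eq_zero_of_cubeCoeff_eq_zero fun K => (cubeCoeff_headDeriv f K).trans (hf _)
    rw [← Fin.cons_self_tail x, apply_cons_eq_headMean_add f, hmean, hderiv, mul_zero, add_zero]

def HasDegreeLE {n : ℕ} (k : ℕ) (f : (Fin n → Bool) → ℝ) : Prop :=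
  ∀ K : Finset (Fin n), k < K.card → cubeCoeff f K = 0

namespace HasDegreeLE

variable {n k : ℕ} {f : (Fin (n + 1) → Bool) → ℝ}

lemma headMean (hf : HasDegreeLE k f) : HasDegreeLE k (headMean f) := fun K hK => by
  rw [cubeCoeff_headMean]
  exact hf _ (by rwa [card_map])

lemma headDeriv (hf : HasDegreeLE (k + 1) f) : HasDegreeLE k (headDeriv f) := fun K hK => by
  rw [cubeCoeff_headDeriv]
  exact hf _ (by rw [card_insert_zero_map_succ]; omega)

lemma headDeriv_eq_zero (hf : HasDegreeLE 0 f) (y : Fin n → Bool) : _root_.headDeriv f y = 0 :=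
  eq_zero_of_cubeCoeff_eq_zero (fun K => by
    rw [cubeCoeff_headDeriv]
    exact hf _ (by rw [card_insert_zero_map_succ]; omega)) y

end HasDegreeLE

section Hypercontractivity

variable {n : ℕ}

lemma cubeMean_sq_succ (f : (Fin (n + 1) → Bool) → ℝ) :
    cubeMean (fun x => f x ^ 2)
      = cubeMean (fun y => headMean f y ^ 2) + cubeMean (fun y => headDeriv f y ^ 2) := by
  rw [cubeMean_succ, ← cubeMean_add]
  congr 1
  funext y
  simp only [apply_cons_eq_headMean_add f, sgn, if_true, Bool.false_eq_true, if_false]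
  ring

lemma cubeMean_pow_four_succ (f : (Fin (n + 1) → Bool) → ℝ) :
    cubeMean (fun x => f x ^ 4)
      = cubeMean (fun y => headMean f y ^ 4)
        + 6 * cubeMean (fun y => headMean f y ^ 2 * headDeriv f y ^ 2)
        + cubeMean (fun y => headDeriv f y ^ 4) := by
  rw [cubeMean_succ, ← cubeMean_const_mul, ← cubeMean_add, ← cubeMean_add]
  congr 1
  funext y
  simp only [apply_cons_eq_headMean_add f, sgn, if_true, Bool.false_eq_true, if_false]
  ring

lemma bonami_step {t a b A B C : ℝ} (ht : 0 ≤ t) (ha : 0 ≤ a) (hb : 0 ≤ b)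
    (hB₀ : 0 ≤ B) (hC₀ : 0 ≤ C) (hA : A ≤ 9 * t * a ^ 2) (hB : B ≤ t * b ^ 2)
    (hC : C ^ 2 ≤ A * B) : A + 6 * C + B ≤ 9 * t * (a + b) ^ 2 := by
  have hC' : C ≤ 3 * t * (a * b) := by
    refine (pow_le_pow_iff_left₀ hC₀ (by positivity) two_ne_zero).mp ?_
    calc C ^ 2 ≤ A * B := hC
      _ ≤ (9 * t * a ^ 2) * (t * b ^ 2) := mul_le_mul hA hB hB₀ (by positivity)
      _ = (3 * t * (a * b)) ^ 2 := by ring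
  nlinarith [mul_nonneg ht (sq_nonneg a), mul_nonneg ht (mul_nonneg ha hb)]

theorem HasDegreeLE.cubeMean_pow_four_le :
    ∀ {n k : ℕ} {f : (Fin n → Bool) → ℝ}, HasDegreeLE k f →
      cubeMean (fun x => f x ^ 4) ≤ 9 ^ k * cubeMean (fun x => f x ^ 2) ^ 2
  | 0, k, f, _ => by
    rw [cubeMean_fin_zero _ default, cubeMean_fin_zero _ default, ← pow_mul]
    exact le_mul_of_one_le_left (by positivity) (one_le_pow₀ (by norm_num))
  | n + 1, 0, f, hf => by
    simp only [cubeMean_pow_four_succ, cubeMean_sq_succ, hf.headDeriv_eq_zero]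
    simpa using hf.headMean.cubeMean_pow_four_le
  | n + 1, k + 1, f, hf => by
    have hCS := cubeMean_mul_sq_le (fun y => _root_.headMean f y ^ 2)
      (fun y => _root_.headDeriv f y ^ 2)
    rw [cubeMean_pow_four_succ, cubeMean_sq_succ, pow_succ']
    refine bonami_step (by positivity) ?_ ?_ ?_ ?_
      (pow_succ' (9 : ℝ) k ▸ hf.headMean.cubeMean_pow_four_le)
      hf.headDeriv.cubeMean_pow_four_le (by simpa only [← pow_mul] using hCS)
    all_goals exact cubeMean_nonneg fun _ => by positivity

end Hypercontractivity

lemma cubeMean_sq_pow_three_le {n : ℕ} (f : (Fin n → Bool) → ℝ) :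
    cubeMean (fun x => f x ^ 2) ^ 3
      ≤ cubeMean (fun x => |f x|) ^ 2 * cubeMean (fun x => f x ^ 4) := by
  set M := cubeMean (fun x => f x ^ 2)
  have hM : 0 ≤ M := cubeMean_nonneg fun _ => by positivity
  have hsqrt (x : Fin n → Bool) : √|f x| ^ 2 = |f x| := Real.sq_sqrt (abs_nonneg _)
  have hM_sq : M ^ 2 ≤ cubeMean (fun x => |f x|) * cubeMean (fun x => |f x| ^ 3) := by
    have := cubeMean_mul_sq_le (fun x => √|f x|) (fun x => |f x| * √|f x|)
    convert this using 3 <;> funext x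
    · rw [← sq_abs]
      linear_combination (-|f x|) * hsqrt x
    · rw [hsqrt]
    · rw [mul_pow, hsqrt]; ring
  have hcube_sq : cubeMean (fun x => |f x| ^ 3) ^ 2 ≤ M * cubeMean (fun x => f x ^ 4) := by
    have := cubeMean_mul_sq_le (fun x => |f x|) (fun x => f x ^ 2)
    convert this using 3 <;> funext x
    · rw [← sq_abs (f x)]; ring
    · rw [sq_abs]
    · ring
  rcases hM.eq_or_lt with hM0 | hMpos
  · rw [← hM0, zero_pow three_ne_zero]
    exact mul_nonneg (sq_nonneg _) (cubeMean_nonneg fun _ => by positivity)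
  · refine le_of_mul_le_mul_right ?_ hMpos
    calc M ^ 3 * M = (M ^ 2) ^ 2 := by ring
      _ ≤ (cubeMean (fun x => |f x|) * cubeMean (fun x => |f x| ^ 3)) ^ 2 :=
        pow_le_pow_left₀ (sq_nonneg M) hM_sq 2
      _ = cubeMean (fun x => |f x|) ^ 2 * cubeMean (fun x => |f x| ^ 3) ^ 2 := by ring
      _ ≤ cubeMean (fun x => |f x|) ^ 2 * (M * cubeMean (fun x => f x ^ 4)) := by gcongr
      _ = _ := by ring

lemma HasDegreeLE.sqrt_cubeMean_sq_le {n k : ℕ} {f : (Fin n → Bool) → ℝ} (hf : HasDegreeLE k f) :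
    √(cubeMean (fun x => f x ^ 2)) ≤ 3 ^ k * cubeMean (fun x => |f x|) := by
  set M := cubeMean (fun x => f x ^ 2)
  set a := cubeMean (fun x => |f x|)
  have ha : 0 ≤ a := cubeMean_nonneg fun _ => abs_nonneg _
  refine Real.sqrt_le_iff.mpr ⟨by positivity, ?_⟩
  rcases (cubeMean_nonneg fun x => sq_nonneg (f x) : 0 ≤ M).eq_or_lt with hM0 | hMpos
  · rw [show M = 0 from hM0.symm]
    positivity
  · refine le_of_mul_le_mul_right ?_ (pow_pos hMpos 2)
    calc M * M ^ 2 = M ^ 3 := by ring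
      _ ≤ a ^ 2 * cubeMean (fun x => f x ^ 4) := cubeMean_sq_pow_three_le f
      _ ≤ a ^ 2 * (9 ^ k * M ^ 2) := by gcongr; exact hf.cubeMean_pow_four_le
      _ = (3 ^ k * a) ^ 2 * M ^ 2 := by rw [show (9 : ℝ) = 3 ^ 2 by norm_num, ← pow_mul]; ring

lemma exp_neg_four_mul_le_inv_three_pow (k : ℕ) : Real.exp (-4 * k) ≤ ((3 : ℝ) ^ k)⁻¹ := by
  have h3 : (3 : ℝ) ≤ Real.exp 4 := by linarith [Real.add_one_le_exp (4 : ℝ)]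
  rw [show -4 * (k : ℝ) = -(k * 4) by ring, Real.exp_neg, Real.exp_nat_mul]
  exact inv_anti₀ (by positivity) (pow_le_pow_left₀ (by norm_num) h3 k)

theorem mean_abs_ge_general (n k : ℕ) (f : (Fin n → Bool) → ℝ)
    (hdeg : ∀ K : Finset (Fin n), k < K.card → cubeCoeff f K = 0) :
    cubeMean (fun x => |f x|)
      ≥ (1 / 4 : ℝ) * Real.exp (-4 * k) * Real.sqrt (cubeMean (fun x => f x ^ 2)) := by
  have hf : HasDegreeLE k f := hdeg
  calc (1 / 4 : ℝ) * Real.exp (-4 * k) * √(cubeMean (fun x => f x ^ 2))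
      ≤ ((3 : ℝ) ^ k)⁻¹ * √(cubeMean (fun x => f x ^ 2)) := by
        gcongr
        linarith [exp_neg_four_mul_le_inv_three_pow k, Real.exp_pos (-4 * k)]
    _ ≤ ((3 : ℝ) ^ k)⁻¹ * (3 ^ k * cubeMean (fun x => |f x|)) := by
        gcongr
        exact hf.sqrt_cubeMean_sq_le
    _ = cubeMean (fun x => |f x|) := by field_simp

/-- If `f : {-1,1}^n → ℝ` is nonzero of degree at most `k`, then
`E_x[|f|] ≥ (1/4) e^{-4k} ‖f‖₂` where `‖f‖₂ = (E_x[f²])^{1/2}`. -/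
theorem mean_abs_ge (n k : ℕ) (f : (Fin n → Bool) → ℝ)
    (hdeg : ∀ K : Finset (Fin n), k < K.card → cubeCoeff f K = 0)
    (hnz : ∃ x, f x ≠ 0) :
    cubeMean (fun x => |f x|)
      ≥ (1 / 4 : ℝ) * Real.exp (-4 * k) * Real.sqrt (cubeMean (fun x => f x ^ 2)) :=
  mean_abs_ge_general n k f hdeg
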